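/- arXiv:1403.6611 — 2 statements merged into one kernel-verified Lean document; each statement's English description precedes it below -/
import Mathlib

section
/- For tuples (a₁,…,a_r) and (b₁,…,b_r) of nodes of a perfect binary tree T, the characteristic tuples satisfy (a₁,…,a_r)* = (b₁,…,b_r)* if and only if there is an automorphism f of T with f(aᵢ) = bᵢ for all 1 ≤ i ≤ r. -/
/-! Automorphisms preserve depth and the ancestor order, and `d(x ⊼ y) + 1` is the number of
common ancestors of `x` and `y`; hence automorphisms preserve characteristic tuples.

Conversely, swapping the two subtrees below every node of a chosen set is an automorphism. If
`aᵢ` and `aⱼ` both pass strictly below a node `p` of depth `k`, they leave `p` in the same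
direction iff `k < d(aᵢ ⊼ aⱼ)`, and likewise for `bᵢ`, `bⱼ`. So when the characteristic tuples
agree, whether `aᵢ` and `bᵢ` leave `p` in the same direction does not depend on `i`, and swapping
exactly at the nodes where they do not sends every `aᵢ` to `bᵢ`. -/

/-- A perfect binary tree of depth `h` (levels `0,…,h-1`): nodes are binary
strings of length `< h`. -/
def PBT (h : ℕ) : Type := {l : List Bool // l.length < h}

/-- Depth of a node: its distance from the root. -/
def depth {h : ℕ} (a : PBT h) : ℕ := a.1.length

/-- The edge (parent-child) relation of the perfect binary tree. -/
def edge {h : ℕ} (a b : PBT h) : Prop := ∃ x : Bool, b.1 = a.1 ++ [x]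

/-- An automorphism of the perfect binary tree: an edge-preserving bijection. -/
structure Aut (h : ℕ) where
  toEquiv : PBT h ≃ PBT h
  edge_iff : ∀ a b : PBT h, edge a b ↔ edge (toEquiv a) (toEquiv b)

/-- An `r`-ary relation is invariant if `f[R] = R` for every automorphism `f`,
where `f` acts componentwise on tuples. -/
def Invariant {h r : ℕ} (R : Set (Fin r → PBT h)) : Prop :=
  ∀ f : Aut h, (fun t : Fin r → PBT h => fun i => f.toEquiv (t i)) '' R = R

/-- Longest common prefix of two binary strings. -/
def lcp : List Bool → List Bool → List Bool
  | [], _ => []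
  | _ :: _, [] => []
  | x :: xs, y :: ys => if x = y then x :: lcp xs ys else []

theorem lcp_length_le (l m : List Bool) : (lcp l m).length ≤ l.length := by
  induction l generalizing m with
  | nil => simp [lcp]
  | cons x xs ih =>
    cases m with
    | nil => simp [lcp]
    | cons y ys =>
      by_cases hxy : x = y
      · simpa [lcp, hxy] using ih ys
      · simp [lcp, hxy]

/-- The least common ancestor of two nodes of the perfect binary tree. -/
def lca {h : ℕ} (a b : PBT h) : PBT h :=
  ⟨lcp a.1 b.1, lt_of_le_of_lt (lcp_length_le a.1 b.1) a.2⟩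

/-- The characteristic tuple of a tuple of nodes: the depths of all components
and of all pairwise least common ancestors (the diagonal entry `(i,i)` is the
depth of the `i`-th component, since `aᵢ ⊼ aᵢ = aᵢ`). -/
def charTuple {h r : ℕ} (a : Fin r → PBT h) : Fin r → Fin r → ℕ :=
  fun i j => depth (lca (a i) (a j))

open List Relation

theorem lcp_self (l : List Bool) : lcp l l = l := by
  induction l with
  | nil => rfl
  | cons x xs ih => simp [lcp, ih]

theorem lcp_prefix (l m : List Bool) : lcp l m <+: l ∧ lcp l m <+: m := by
  induction l generalizing m with
  | nil => simp [lcp]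
  | cons x xs ih =>
    cases m with
    | nil => simp [lcp]
    | cons y ys =>
      by_cases hxy : x = y
      · subst hxy
        simpa [lcp] using ih ys
      · simp [lcp, hxy]

theorem prefix_lcp_iff {p l m : List Bool} : p <+: lcp l m ↔ p <+: l ∧ p <+: m := by
  refine ⟨fun hp => ⟨hp.trans (lcp_prefix l m).1, hp.trans (lcp_prefix l m).2⟩, ?_⟩
  rintro ⟨hl, hm⟩
  induction p generalizing l m with
  | nil => simp
  | cons x xs ih =>
    obtain ⟨s, rfl⟩ := hl
    obtain ⟨t, rfl⟩ := hm
    simpa [lcp] using ih (xs.prefix_append s) (xs.prefix_append t)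

theorem take_eq_take_iff_le_length_lcp {l m : List Bool} {k : ℕ} (hl : k ≤ l.length) :
    l.take k = m.take k ↔ k ≤ (lcp l m).length := by
  constructor
  · intro h
    have := (prefix_lcp_iff.mpr ⟨take_prefix k l, h ▸ take_prefix k m⟩).length_le
    simpa [hl] using this
  · intro hk
    obtain ⟨hcl, hcm⟩ := lcp_prefix l m
    rw [prefix_iff_eq_take] at hcl hcm
    rw [← min_eq_left hk, ← take_take, ← take_take, ← hcl, ← hcm]

theorem getElem_eq_getElem_iff_lt_length_lcp {l m : List Bool} {k : ℕ} (hl : k < l.length)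
    (hm : k < m.length) (htake : l.take k = m.take k) :
    l[k] = m[k] ↔ k < (lcp l m).length := by
  rw [Nat.lt_iff_add_one_le, ← take_eq_take_iff_le_length_lcp hl, ← take_append_getElem hl,
    ← take_append_getElem hm, htake, append_cancel_left_eq, singleton_inj]

theorem xor_getElem_eq_of_length_lcp_eq {l m l' m' : List Bool}
    (hlcp : (lcp l m).length = (lcp l' m').length) (hl : l.length = l'.length)
    (hm : m.length = m'.length) {k : ℕ} (hkl : k < l.length) (hkm : k < m.length)
    (htake : l.take k = m.take k) :
    (l[k] ^^ l'[k]'(hl ▸ hkl)) = (m[k] ^^ m'[k]'(hm ▸ hkm)) := by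
  have htake' : l'.take k = m'.take k := by
    rw [take_eq_take_iff_le_length_lcp (hl ▸ hkl.le), ← hlcp,
      ← take_eq_take_iff_le_length_lcp hkl.le]
    exact htake
  have hiff : l[k] = m[k] ↔ l'[k]'(hl ▸ hkl) = m'[k]'(hm ▸ hkm) := by
    rw [getElem_eq_getElem_iff_lt_length_lcp hkl hkm htake,
      getElem_eq_getElem_iff_lt_length_lcp _ _ htake', hlcp]
  revert hiff
  cases l[k] <;> cases m[k] <;> cases l'[k]'(hl ▸ hkl) <;> cases m'[k]'(hm ▸ hkm) <;> decide

namespace PBT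

variable {h : ℕ}

instance : Finite (PBT h) := (List.finite_length_lt Bool h).to_subtype

theorem reflTransGen_edge_iff_prefix {x y : PBT h} : ReflTransGen edge x y ↔ x.1 <+: y.1 := by
  constructor
  · intro hxy
    induction hxy with
    | refl => exact prefix_refl _
    | tail _ hyz ih =>
      obtain ⟨t, ht⟩ := hyz
      exact ht ▸ ih.trans (prefix_append _ _)
  · rintro ⟨s, hs⟩
    induction s using List.reverseRecOn generalizing y with
    | nil => exact (Subtype.ext (by simpa using hs) : x = y) ▸ ReflTransGen.refl
    | append_singleton s t ih =>
      have hlen : (x.1 ++ s).length < h :=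
        lt_of_lt_of_le (by simp [← hs]) y.2.le
      exact (ih (y := ⟨x.1 ++ s, hlen⟩) rfl).tail ⟨t, by simp [← hs]⟩

theorem ncard_setOf_prefix {c : List Bool} (hc : c.length < h) :
    {z : PBT h | z.1 <+: c}.ncard = c.length + 1 := by
  let node (k : Fin (c.length + 1)) : PBT h :=
    ⟨c.take k, lt_of_le_of_lt (length_take_le' _ _) hc⟩
  have hrange : Set.range node = {z : PBT h | z.1 <+: c} := by
    ext z
    refine ⟨?_, fun hz => ⟨⟨z.1.length, Nat.lt_succ_of_le hz.length_le⟩, ?_⟩⟩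
    · rintro ⟨k, rfl⟩
      exact take_prefix _ _
    · exact Subtype.ext (prefix_iff_eq_take.mp hz).symm
  have hinj : Function.Injective node := by
    intro k l hkl
    have := congrArg (fun z : PBT h => z.1.length) hkl
    simp only [node, length_take] at this
    exact Fin.ext (by omega)
  rw [← hrange, Set.ncard_range_of_injective hinj, Nat.card_eq_fintype_card, Fintype.card_fin]

theorem depth_lca_add_one (x y : PBT h) :
    depth (lca x y) + 1 = {z | ReflTransGen edge z x ∧ ReflTransGen edge z y}.ncard := by
  simp only [reflTransGen_edge_iff_prefix, ← prefix_lcp_iff]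
  exact (ncard_setOf_prefix (lca x y).2).symm

end PBT

namespace Aut

variable {h : ℕ}

theorem reflTransGen_edge_iff (f : Aut h) {x y : PBT h} :
    ReflTransGen edge (f.toEquiv x) (f.toEquiv y) ↔ ReflTransGen edge x y := by
  refine ⟨fun hxy => ?_,
    fun hxy => ReflTransGen.lift f.toEquiv (fun a b => (f.edge_iff a b).mp) x y hxy⟩
  simpa [Function.onFun] using ReflTransGen.lift f.toEquiv.symm
    (fun a b hab => (f.edge_iff _ _).mpr (by simpa using hab)) _ _ hxy

theorem depth_lca (f : Aut h) (x y : PBT h) :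
    depth (lca (f.toEquiv x) (f.toEquiv y)) = depth (lca x y) := by
  have hpre : f.toEquiv ⁻¹' {z | ReflTransGen edge z (f.toEquiv x) ∧
      ReflTransGen edge z (f.toEquiv y)} = {z | ReflTransGen edge z x ∧ ReflTransGen edge z y} := by
    ext z
    simp [reflTransGen_edge_iff]
  apply Nat.add_right_cancel (m := 1)
  rw [PBT.depth_lca_add_one, PBT.depth_lca_add_one, ← hpre,
    Set.ncard_preimage_of_injective_subset_range f.toEquiv.injective (by simp)]

end Aut

/-- The action on node addresses of the automorphism that swaps the two subtrees below every
node `p` with `g p`. -/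
def twist (g : List Bool → Bool) : List Bool → List Bool
  | [] => []
  | x :: xs => (x ^^ g []) :: twist (fun p => g (x :: p)) xs

@[simp]
theorem length_twist (g : List Bool → Bool) (l : List Bool) : (twist g l).length = l.length := by
  induction l generalizing g with
  | nil => rfl
  | cons x xs ih => simp [twist, ih]

theorem getElem_twist (g : List Bool → Bool) (l : List Bool) {k : ℕ}
    (hk : k < (twist g l).length) :
    (twist g l)[k] = (l[k]'(by simpa using hk) ^^ g (l.take k)) := by
  induction l generalizing g k with
  | nil => simp at hk
  | cons x xs ih =>
    cases k with
    | zero => simp [twist]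
    | succ k => simp [twist, ih]

theorem take_twist (g : List Bool → Bool) (l : List Bool) (k : ℕ) :
    (twist g l).take k = twist g (l.take k) := by
  induction l generalizing g k with
  | nil => simp [twist]
  | cons x xs ih =>
    cases k with
    | zero => simp [twist]
    | succ k => simp [twist, ih]

theorem twist_injective (g : List Bool → Bool) : Function.Injective (twist g) := by
  intro l m hlm
  induction l generalizing g m with
  | nil => cases m <;> simp_all [twist]
  | cons x xs ih =>
    cases m with
    | nil => simp [twist] at hlm
    | cons y ys =>
      simp only [twist, cons.injEq, Bool.xor_left_inj] at hlm
      exact hlm.1 ▸ congrArg (x :: ·) (ih _ (hlm.1 ▸ hlm.2))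

theorem twist_prefix_twist_iff (g : List Bool → Bool) {l m : List Bool} :
    twist g l <+: twist g m ↔ l <+: m := by
  rw [prefix_iff_eq_take, prefix_iff_eq_take, take_twist, length_twist,
    (twist_injective g).eq_iff]

theorem edge_iff_prefix {h : ℕ} {x y : PBT h} :
    edge x y ↔ x.1 <+: y.1 ∧ y.1.length = x.1.length + 1 := by
  constructor
  · rintro ⟨t, ht⟩
    simp [ht]
  · rintro ⟨⟨s, hs⟩, hlen⟩
    obtain ⟨t, rfl⟩ : ∃ t, s = [t] := by
      rw [← hs, length_append] at hlen
      exact length_eq_one_iff.mp (by omega)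
    exact ⟨t, hs.symm⟩

noncomputable def twistAut {h : ℕ} (g : List Bool → Bool) : Aut h where
  toEquiv := Equiv.ofBijective (fun x => ⟨twist g x.1, by simpa using x.2⟩) <|
    Finite.injective_iff_bijective.mp fun x y hxy =>
      Subtype.ext (twist_injective g (congrArg Subtype.val hxy))
  edge_iff x y := by
    rw [edge_iff_prefix, edge_iff_prefix]
    change _ ↔ twist g x.1 <+: twist g y.1 ∧ (twist g y.1).length = (twist g x.1).length + 1
    rw [twist_prefix_twist_iff, length_twist, length_twist]

theorem coe_twistAut_apply {h : ℕ} (g : List Bool → Bool) (x : PBT h) :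
    ((twistAut g).toEquiv x).1 = twist g x.1 := rfl

section SwapFlag

variable {h r : ℕ} (a b : Fin r → PBT h)

open Classical in
/-- Whether some `aᵢ` leaves the node `p` in a different direction than `bᵢ` does. -/
noncomputable def swapFlag (p : List Bool) : Bool :=
  decide (∃ i, (a i).1.take p.length = p ∧ (a i).1[p.length]? ≠ (b i).1[p.length]?)

variable {a b}

theorem length_eq_of_charTuple_eq (hab : charTuple a = charTuple b) (i : Fin r) :
    (a i).1.length = (b i).1.length := by
  simpa [charTuple, depth, lca, lcp_self] using congrFun (congrFun hab i) i

theorem swapFlag_take (hab : charTuple a = charTuple b) (i : Fin r) {k : ℕ}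
    (hk : k < (a i).1.length) :
    swapFlag a b ((a i).1.take k) =
      ((a i).1[k] ^^ (b i).1[k]'(length_eq_of_charTuple_eq hab i ▸ hk)) := by
  have hlen := length_eq_of_charTuple_eq hab
  have hk' : ((a i).1.take k).length = k := by simp [hk.le]
  rw [swapFlag, hk']
  cases hbit : ((a i).1[k] ^^ (b i).1[k]'(hlen i ▸ hk))
  · simp only [decide_eq_false_iff_not, not_exists, not_and]
    intro j hj
    by_cases hkj : k < (a j).1.length
    · have hxor := xor_getElem_eq_of_length_lcp_eq (congrFun (congrFun hab j) i) (hlen j) (hlen i)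
        hkj hk hj
      rw [hbit, bne_eq_false_iff_eq] at hxor
      rw [getElem?_eq_getElem hkj, getElem?_eq_getElem (hlen j ▸ hkj), hxor, not_not]
    · simp [(hlen j).symm, hkj]
  · simp only [decide_eq_true_eq]
    refine ⟨i, rfl, ?_⟩
    rw [getElem?_eq_getElem hk, getElem?_eq_getElem (hlen i ▸ hk), Ne, Option.some_inj]
    exact Bool.xor_iff_ne.mp hbit

end SwapFlag

/-- Two tuples of nodes have equal characteristic tuples iff some automorphism
of the tree maps one to the other. -/
theorem charTuple_eq_iff_aut {h r : ℕ} (a b : Fin r → PBT h) :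
    charTuple a = charTuple b ↔ ∃ f : Aut h, ∀ i, f.toEquiv (a i) = b i := by
  constructor
  · intro hab
    refine ⟨twistAut (swapFlag a b), fun i => Subtype.ext (ext_getElem ?_ fun k hk _ => ?_)⟩
    · simpa [coe_twistAut_apply] using length_eq_of_charTuple_eq hab i
    · simp only [coe_twistAut_apply, getElem_twist]
      rw [swapFlag_take hab i (by simpa [coe_twistAut_apply] using hk)]
      simp
  · rintro ⟨f, hf⟩
    funext i j
    simp only [charTuple, ← hf, f.depth_lca]
end

section
/- The class K' of structures defined from a class K is closed under substructures: if G ∈ K' and H is a substructure of G, then H ∈ K'. Specifically: take G satisfying the structural assumptions; if G satisfies Condition 2 (the depth of its largest perfect binary subtree rooted at root is less than h + h^c), then every substructure also satisfies Condition 2; if G satisfies Condition 1, then for each substructure H either T(H) = T(G) (and H satisfies Condition 1) or the depth of T(H) is strictly smaller (and H satisfies Condition 2). -/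
/-- A structure of the vocabulary `τ' = τ ∪ {root, E, P}`, where `τ` consists
of relation symbols `R i` of arity `ar i` for `i : Fin k`. -/
structure Str (k : ℕ) (ar : Fin k → ℕ) where
  V : Type
  root : V
  E : V → V → Prop
  P : V → Prop
  R : ∀ i : Fin k, (Fin (ar i) → V) → Prop

/-- `H` is a substructure of `G`: `H` is (isomorphic to) the structure induced
by `G` on a subset of its vertices containing the root. -/
def IsSubstructure {k : ℕ} {ar : Fin k → ℕ} (H G : Str k ar) : Prop :=
  ∃ e : H.V ↪ G.V, e H.root = G.root ∧
    (∀ a b, H.E a b ↔ G.E (e a) (e b)) ∧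
    (∀ a, H.P a ↔ G.P (e a)) ∧
    (∀ i t, H.R i t ↔ G.R i (fun j => e (t j)))

/-- An embedding of the perfect binary tree with `n` levels (nodes are binary
strings of length `< n`) into `G`, rooted at the root of `G` and following the
edges of `G`.  The largest perfect binary subtree `T(G)` of `G` rooted at
`root` has depth `n` iff such an embedding exists for `n` but not for `n+1`. -/
structure PerfEmb {k : ℕ} {ar : Fin k → ℕ} (G : Str k ar) (n : ℕ) where
  φ : List Bool → G.V
  root_eq : φ [] = G.root
  inj : Set.InjOn φ {l : List Bool | l.length < n}
  edge : ∀ (l : List Bool) (x : Bool), l.length + 1 < n → G.E (φ l) (φ (l ++ [x]))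

/-- The structural assumptions on the `τ'`-structures considered: `(V, E)` is a
directed acyclic graph, the nodes reachable from the root form a binary tree,
and `P` and all the relations `R i`, restricted to the largest perfect binary
subtree `T(G)`, are saturated (membership depends only on the depths). -/
def Good {k : ℕ} {ar : Fin k → ℕ} (G : Str k ar) : Prop :=
  (∀ a : G.V, ¬ Relation.TransGen G.E a a) ∧
  (∀ a : G.V, Relation.ReflTransGen G.E G.root a → a ≠ G.root →
      ∃! p : G.V, Relation.ReflTransGen G.E G.root p ∧ G.E p a) ∧
  (∀ a : G.V, ¬ G.E a G.root) ∧
  (∀ a b c d : G.V, G.E a b → G.E a c → G.E a d → b = c ∨ b = d ∨ c = d) ∧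
  (∀ n : ℕ, ¬ Nonempty (PerfEmb G (n + 1)) → ∀ ψ : PerfEmb G n,
    (∀ l m : List Bool, l.length < n → m.length < n → l.length = m.length →
        (G.P (ψ.φ l) ↔ G.P (ψ.φ m))) ∧
    (∀ (i : Fin k) (t s : Fin (ar i) → List Bool),
        (∀ j, (t j).length < n) → (∀ j, (s j).length < n) →
        (∀ j, (t j).length = (s j).length) →
        (G.R i (fun j => ψ.φ (t j)) ↔ G.R i (fun j => ψ.φ (s j)))))

/-- All nodes in the first `hh` levels of the tree are marked by `P`. -/
def AllP {k : ℕ} {ar : Fin k → ℕ} {G : Str k ar} {n : ℕ} (ψ : PerfEmb G n)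
    (hh : ℕ) : Prop :=
  ∀ l : List Bool, l.length < hh → G.P (ψ.φ l)

/-- Condition 1: `T(G)` has depth `h + h^c` where all nodes in the first `h`
levels are marked by `P`, no node in the last `h^c` levels is marked by `P`,
no tuple involving a node of the last `h^c` levels belongs to any `R i`, and
the `τ`-structure `C⁻¹(T_h(G))` decoded from the first `h` levels (whose
domain is `{0,…,h-1}` and where `R i` holds of a tuple of numbers iff it holds
of some tuple of nodes of those depths) belongs to `K`. -/
def Cond1 (c : ℕ) {k : ℕ} {ar : Fin k → ℕ}
    (K : (hh : ℕ) → (∀ i : Fin k, (Fin (ar i) → ℕ) → Prop) → Prop)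
    (G : Str k ar) : Prop :=
  ∃ (n hh : ℕ) (ψ : PerfEmb G n), ¬ Nonempty (PerfEmb G (n + 1)) ∧
    n = hh + hh ^ c ∧
    AllP ψ hh ∧
    (∀ l : List Bool, hh ≤ l.length → l.length < n → ¬ G.P (ψ.φ l)) ∧
    (∀ (i : Fin k) (t : Fin (ar i) → List Bool), (∀ j, (t j).length < n) →
        (∃ j, hh ≤ (t j).length) → ¬ G.R i (fun j => ψ.φ (t j))) ∧
    K hh (fun i m => (∀ j, m j < hh) ∧ ∃ t : Fin (ar i) → List Bool,
        (∀ j, (t j).length = m j) ∧ G.R i (fun j => ψ.φ (t j)))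

/-- Condition 2: the depth of `T(G)` is less than `h + h^c`, where `h` is the
largest number such that all nodes in the first `h` levels are marked `P`. -/
def Cond2 (c : ℕ) {k : ℕ} {ar : Fin k → ℕ} (G : Str k ar) : Prop :=
  ∃ (n : ℕ) (ψ : PerfEmb G n), ¬ Nonempty (PerfEmb G (n + 1)) ∧
    ∃ hh : ℕ, hh ≤ n ∧ AllP ψ hh ∧
      (∀ h' : ℕ, h' ≤ n → AllP ψ h' → h' ≤ hh) ∧ n < hh + hh ^ c

/-- `G ∈ K'` iff Condition 1 or Condition 2 holds. -/
def MemK' (c : ℕ) {k : ℕ} {ar : Fin k → ℕ}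
    (K : (hh : ℕ) → (∀ i : Fin k, (Fin (ar i) → ℕ) → Prop) → Prop)
    (G : Str k ar) : Prop :=
  Cond1 c K G ∨ Cond2 c G

/-!
A substructure `H` of `G` contains the root and inherits the edges, so every perfect binary
tree of `H` is one of `G`: the depth of `T(H)` is at most that of `T(G)`. As out-degrees in `G`
are at most two, the two children of a node of `T(G)` are all of its children, so by induction
every node of `T(H)` is a node of `T(G)` at the same depth. Saturation of `G` therefore makes
`P` and the `R i` on `T(H)` depend on depths exactly as on `T(G)`. If `T(H)` has the full depth
of `T(G)`, it satisfies Condition 1 with the same `h` and the same decoded structure; otherwise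
its depth is below `h + h^c`, and its first non-`P` level (if any) is that of `G`, giving
Condition 2.
-/

section

variable {k : ℕ} {ar : Fin k → ℕ} {G H : Str k ar}

lemma nonempty_perfEmb_one (G : Str k ar) : Nonempty (PerfEmb G 1) := by
  refine ⟨⟨fun _ => G.root, rfl, fun a ha b hb _ => ?_, fun l x h => by omega⟩⟩
  simp only [Set.mem_ofPred_eq, Nat.lt_one_iff, List.length_eq_zero_iff] at ha hb
  rw [ha, hb]

def PerfEmb.restrict {m n : ℕ} (h : m ≤ n) (ψ : PerfEmb G n) : PerfEmb G m :=
  ⟨ψ.φ, ψ.root_eq, ψ.inj.mono fun _ hl => lt_of_lt_of_le hl h,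
    fun l x hl => ψ.edge l x (lt_of_lt_of_le hl h)⟩

def PerfEmb.map (e : H.V ↪ G.V) (he_root : e H.root = G.root)
    (he_E : ∀ a b, H.E a b ↔ G.E (e a) (e b)) {n : ℕ} (ψ : PerfEmb H n) : PerfEmb G n :=
  ⟨fun l => e (ψ.φ l), by rw [ψ.root_eq, he_root],
    fun _ ha _ hb hab => ψ.inj ha hb (e.injective hab),
    fun l x h => (he_E _ _).mp (ψ.edge l x h)⟩

lemma Good.eq_or_eq_or_eq_of_E (hG : Good G) {a b c d : G.V} (hb : G.E a b) (hc : G.E a c)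
    (hd : G.E a d) : b = c ∨ b = d ∨ c = d :=
  hG.2.2.2.1 a b c d hb hc hd

lemma Good.P_iff_of_length_eq (hG : Good G) {n : ℕ} (hmax : ¬ Nonempty (PerfEmb G (n + 1)))
    (ψ : PerfEmb G n) {l m : List Bool} (hl : l.length < n) (hm : m.length < n)
    (hlm : l.length = m.length) : G.P (ψ.φ l) ↔ G.P (ψ.φ m) :=
  (hG.2.2.2.2 n hmax ψ).1 l m hl hm hlm

lemma Good.R_iff_of_length_eq (hG : Good G) {n : ℕ} (hmax : ¬ Nonempty (PerfEmb G (n + 1)))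
    (ψ : PerfEmb G n) (i : Fin k) {t s : Fin (ar i) → List Bool} (ht : ∀ j, (t j).length < n)
    (hs : ∀ j, (s j).length < n) (hts : ∀ j, (t j).length = (s j).length) :
    G.R i (fun j => ψ.φ (t j)) ↔ G.R i (fun j => ψ.φ (s j)) :=
  (hG.2.2.2.2 n hmax ψ).2 i t s ht hs hts

lemma PerfEmb.exists_length_eq_and_φ_eq (hG : Good G) {m n : ℕ} (ψ : PerfEmb G m)
    (ψ' : PerfEmb G n) (l : List Bool) (hm : l.length < m) (hn : l.length < n) :
    ∃ l', l'.length = l.length ∧ ψ'.φ l' = ψ.φ l := by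
  induction l using List.reverseRecOn with
  | nil => exact ⟨[], rfl, ψ'.root_eq.trans ψ.root_eq.symm⟩
  | append_singleton l x ih =>
    simp only [List.length_append, List.length_singleton] at hm hn
    obtain ⟨l', hlen, hl'⟩ := ih (by omega) (by omega)
    have hchild : G.E (ψ'.φ l') (ψ.φ (l ++ [x])) := hl' ▸ ψ.edge l x hm
    have hne : ψ'.φ (l' ++ [false]) ≠ ψ'.φ (l' ++ [true]) := fun h => by
      simpa using ψ'.inj (by simp; omega) (by simp; omega) h
    rcases hG.eq_or_eq_or_eq_of_E hchild (ψ'.edge l' false (by omega))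
        (ψ'.edge l' true (by omega)) with h | h | h
    · exact ⟨l' ++ [false], by simp [hlen], h.symm⟩
    · exact ⟨l' ++ [true], by simp [hlen], h.symm⟩
    · exact absurd h hne

lemma IsSubstructure.exists_maximal_perfEmb (hsub : IsSubstructure H G) {nG : ℕ}
    (hmaxG : ¬ Nonempty (PerfEmb G (nG + 1))) :
    ∃ n, 0 < n ∧ n ≤ nG ∧ Nonempty (PerfEmb H n) ∧ ¬ Nonempty (PerfEmb H (n + 1)) := by
  classical
  obtain ⟨e, he_root, he_E, -⟩ := hsub
  have hbound : ∀ n, Nonempty (PerfEmb H n) → n ≤ nG := fun n ⟨ψ⟩ => by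
    by_contra h
    exact hmaxG ⟨(ψ.map e he_root he_E).restrict (by omega)⟩
  have hone := nonempty_perfEmb_one H
  have hpos : 0 < nG := hbound 1 hone
  refine ⟨Nat.findGreatest (fun n => Nonempty (PerfEmb H n)) nG, Nat.le_findGreatest hpos hone,
    Nat.findGreatest_le nG, Nat.findGreatest_spec (P := fun n => Nonempty (PerfEmb H n)) hpos hone,
    fun hsucc => ?_⟩
  exact Nat.findGreatest_is_greatest (Nat.lt_succ_self _) (hbound _ hsucc) hsucc

section Transfer

variable (hsub : IsSubstructure H G) (hG : Good G) {nG nH : ℕ}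
  (hmaxG : ¬ Nonempty (PerfEmb G (nG + 1))) (ψG : PerfEmb G nG) (ψH : PerfEmb H nH)
  (hle : nH ≤ nG)
include hsub hG hmaxG hle

lemma IsSubstructure.P_iff {l m : List Bool} (hl : l.length < nH) (hlm : m.length = l.length) :
    H.P (ψH.φ l) ↔ G.P (ψG.φ m) := by
  obtain ⟨e, he_root, he_E, he_P, -⟩ := hsub
  obtain ⟨l', hlen, hl'⟩ := (ψH.map e he_root he_E).exists_length_eq_and_φ_eq hG ψG l hl (by omega)
  rw [he_P, show e (ψH.φ l) = ψG.φ l' from hl'.symm]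
  exact hG.P_iff_of_length_eq hmaxG ψG (by omega) (by omega) (by omega)

lemma IsSubstructure.R_iff (i : Fin k) {t s : Fin (ar i) → List Bool}
    (ht : ∀ j, (t j).length < nH) (hts : ∀ j, (s j).length = (t j).length) :
    H.R i (fun j => ψH.φ (t j)) ↔ G.R i (fun j => ψG.φ (s j)) := by
  obtain ⟨e, he_root, he_E, -, he_R⟩ := hsub
  choose t' hlen ht' using fun j =>
    (ψH.map e he_root he_E).exists_length_eq_and_φ_eq hG ψG (t j) (ht j) ((ht j).trans_le hle)
  have hmap : (fun j => e (ψH.φ (t j))) = fun j => ψG.φ (t' j) := funext fun j => (ht' j).symm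
  rw [he_R, hmap]
  exact hG.R_iff_of_length_eq hmaxG ψG i (fun j => by have := ht j; have := hlen j; omega)
    (fun j => by have := ht j; have := hts j; omega) (fun j => by rw [hlen, hts])

end Transfer

lemma cond2_of_allP (c : ℕ) {n : ℕ} (ψ : PerfEmb H n) (hmax : ¬ Nonempty (PerfEmb H (n + 1)))
    (hpos : 0 < n) (hP : AllP ψ n) : Cond2 c H :=
  ⟨n, ψ, hmax, n, le_rfl, hP, fun _ h _ => h, Nat.lt_add_of_pos_right (pow_pos hpos c)⟩

lemma cond2_of_not_P (c : ℕ) {n hh : ℕ} (ψ : PerfEmb H n) (hmax : ¬ Nonempty (PerfEmb H (n + 1)))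
    (hlt : hh < n) (hP : AllP ψ hh) {l : List Bool} (hl : l.length = hh) (hnP : ¬ H.P (ψ.φ l))
    (hbound : n < hh + hh ^ c) : Cond2 c H :=
  ⟨n, ψ, hmax, hh, hlt.le, hP, fun _ _ hP' => not_lt.mp fun h => hnP (hP' l (hl ▸ h)), hbound⟩

lemma IsSubstructure.cond1_of_same_depth {c : ℕ}
    {K : (hh : ℕ) → (∀ i : Fin k, (Fin (ar i) → ℕ) → Prop) → Prop} (hsub : IsSubstructure H G)
    (hG : Good G) {n hh : ℕ} {ψG : PerfEmb G n} (hmaxG : ¬ Nonempty (PerfEmb G (n + 1)))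
    (hn : n = hh + hh ^ c) (hP : AllP ψG hh)
    (hnoP : ∀ l : List Bool, hh ≤ l.length → l.length < n → ¬ G.P (ψG.φ l))
    (hnoR : ∀ (i : Fin k) (t : Fin (ar i) → List Bool), (∀ j, (t j).length < n) →
        (∃ j, hh ≤ (t j).length) → ¬ G.R i (fun j => ψG.φ (t j)))
    (hK : K hh (fun i m => (∀ j, m j < hh) ∧ ∃ t : Fin (ar i) → List Bool,
        (∀ j, (t j).length = m j) ∧ G.R i (fun j => ψG.φ (t j))))
    (ψH : PerfEmb H n) (hmaxH : ¬ Nonempty (PerfEmb H (n + 1))) : Cond1 c K H := by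
  have hP_iff {l : List Bool} (hl : l.length < n) : H.P (ψH.φ l) ↔ G.P (ψG.φ l) :=
    hsub.P_iff hG hmaxG ψG ψH le_rfl hl rfl
  have hR_iff (i : Fin k) {t : Fin (ar i) → List Bool} (ht : ∀ j, (t j).length < n) :
      H.R i (fun j => ψH.φ (t j)) ↔ G.R i (fun j => ψG.φ (t j)) :=
    hsub.R_iff hG hmaxG ψG ψH le_rfl i ht fun _ => rfl
  refine ⟨n, hh, ψH, hmaxH, hn, fun l hl => (hP_iff (by omega)).mpr (hP l hl),
    fun l h₁ h₂ => by rw [hP_iff h₂]; exact hnoP l h₁ h₂,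
    fun i t ht hex => by rw [hR_iff i ht]; exact hnoR i t ht hex, ?_⟩
  convert hK using 3 with i m
  exact and_congr_right fun hm => exists_congr fun t => and_congr_right fun hlen =>
    hR_iff i fun j => by have := hm j; have := hlen j; omega

lemma IsSubstructure.cond2_of_depth_lt (c : ℕ) (hsub : IsSubstructure H G) (hG : Good G)
    {nG nH hh : ℕ} {ψG : PerfEmb G nG} (hmaxG : ¬ Nonempty (PerfEmb G (nG + 1))) (hP : AllP ψG hh)
    (hnP : hh < nG → ∃ l : List Bool, l.length = hh ∧ ¬ G.P (ψG.φ l))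
    (ψH : PerfEmb H nH) (hmaxH : ¬ Nonempty (PerfEmb H (nH + 1))) (hpos : 0 < nH)
    (hle : nH ≤ nG) (hbound : nH < hh + hh ^ c) : Cond2 c H := by
  have hP_iff {l m : List Bool} (hl : l.length < nH) (hlm : m.length = l.length) :=
    hsub.P_iff hG hmaxG ψG ψH hle hl hlm
  rcases lt_or_ge hh nH with hlt | hge
  · obtain ⟨l, hl, hlP⟩ := hnP (hlt.trans_le hle)
    refine cond2_of_not_P c ψH hmaxH hlt (fun l' hl' => (hP_iff (by omega) rfl).mpr (hP l' hl'))
      (l := List.replicate hh false) (by simp) ?_ hbound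
    rwa [hP_iff (by simpa using hlt) (by simpa using hl)]
  · exact cond2_of_allP c ψH hmaxH hpos fun l hl => (hP_iff hl rfl).mpr (hP l (by omega))

end

theorem memK'_closed_under_substructures_general {k : ℕ} {ar : Fin k → ℕ} (c : ℕ)
    (K : (hh : ℕ) → (∀ i : Fin k, (Fin (ar i) → ℕ) → Prop) → Prop)
    (G H : Str k ar) (hG : Good G)
    (hsub : IsSubstructure H G) (hmem : MemK' c K G) : MemK' c K H := by
  rcases hmem with ⟨nG, hh, ψG, hmaxG, hn, hP, hnoP, hnoR, hK⟩ |
    ⟨nG, ψG, hmaxG, hh, -, hP, hhmax, hbound⟩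
  · obtain ⟨nH, hpos, hle, ⟨ψH⟩, hmaxH⟩ := hsub.exists_maximal_perfEmb hmaxG
    rcases hle.eq_or_lt with rfl | hlt
    · exact Or.inl (hsub.cond1_of_same_depth hG hmaxG hn hP hnoP hnoR hK ψH hmaxH)
    · have hnP (_ : hh < nG) : ∃ l : List Bool, l.length = hh ∧ ¬ G.P (ψG.φ l) :=
        ⟨List.replicate hh false, by simp, hnoP _ (by simp) (by simpa)⟩
      exact Or.inr (hsub.cond2_of_depth_lt c hG hmaxG hP hnP ψH hmaxH hpos hle (hn ▸ hlt))
  · obtain ⟨nH, hpos, hle, ⟨ψH⟩, hmaxH⟩ := hsub.exists_maximal_perfEmb hmaxG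
    have hnP (hlt : hh < nG) : ∃ l : List Bool, l.length = hh ∧ ¬ G.P (ψG.φ l) := by
      by_contra! hlevel
      have hP' : AllP ψG (hh + 1) := fun l hl =>
        (Nat.lt_succ_iff_lt_or_eq.mp hl).elim (hP l) (hlevel l)
      exact absurd (hhmax (hh + 1) hlt hP') (by omega)
    exact Or.inr <|
      hsub.cond2_of_depth_lt c hG hmaxG hP hnP ψH hmaxH hpos hle (hle.trans_lt hbound)

/-- The class `K'` is closed under substructures: if `G ∈ K'` and `H` is a
substructure of `G` (both satisfying the structural assumptions), then
`H ∈ K'`. -/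
theorem memK'_closed_under_substructures {k : ℕ} {ar : Fin k → ℕ} (c : ℕ)
    (K : (hh : ℕ) → (∀ i : Fin k, (Fin (ar i) → ℕ) → Prop) → Prop)
    (G H : Str k ar) (hG : Good G) (hH : Good H)
    (hsub : IsSubstructure H G) (hmem : MemK' c K G) : MemK' c K H :=
  memK'_closed_under_substructures_general c K G H hG hsub hmem
end
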